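/- arXiv:2501.12549 — 10 statements merged into one kernel-verified Lean document; each statement's English description precedes it below -/
import Mathlib

section
/- Let G=(V,E) be an undirected multigraph with edge set partitioned into safe edges S and unsafe edges U, and let p ≥ 1, q ≥ 0 be integers. An edge set F ⊆ E has the property that (V, F \ F') is p-edge-connected for every F' ⊆ F ∩ U with |F'| ≤ q, if and only if for every nonempty proper vertex subset R ⊊ V, the cut edge set F ∩ δ(R) either contains at least p safe edges or contains at least p+q edges in total. -/
/-!
Fix a cut `C` and let `A = F ∩ C`. Deleting a set `D` of at most `q` unsafe edges leaves
`#(A \ D) ≥ max #(A ∩ S) (#A - q)` edges of the cut, since `D` misses the safe edges and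
`#D ≤ q`; and this bound is attained by deleting `min q #(A \ S)` unsafe edges of `A`.
So some admissible deletion drops the cut below `p` exactly when both `#(A ∩ S) < p` and
`#A < p + q`. The cuts are independent of each other, so the characterization is cut by cut.
-/

open Finset

/-- The set of edges with exactly one endpoint in `R`. -/
def cutEdges {V ε : Type} [DecidableEq V] [Fintype ε] [DecidableEq ε]
    (ends : ε → V × V) (R : Finset V) : Finset ε :=
  Finset.univ.filter fun e =>
    ((ends e).1 ∈ R ∧ (ends e).2 ∉ R) ∨ ((ends e).2 ∈ R ∧ (ends e).1 ∉ R)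

/-- `F` is `(p,q)`-feasible: every nontrivial cut contains at least `p` safe edges
or at least `p+q` edges in total. -/
def Feasible {V ε : Type} [Fintype V] [DecidableEq V] [Fintype ε] [DecidableEq ε]
    (ends : ε → V × V) (S : Finset ε) (p q : ℕ) (F : Finset ε) : Prop :=
  ∀ R : Finset V, R.Nonempty → R ≠ Finset.univ →
    p ≤ ((F ∩ cutEdges ends R) ∩ S).card ∨ p + q ≤ (F ∩ cutEdges ends R).card

section
variable {α : Type*} [DecidableEq α]

lemma le_card_sdiff_of_disjoint {A S D : Finset α} {p q : ℕ} (hDS : Disjoint D S)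
    (hD : #D ≤ q) (h : p ≤ #(A ∩ S) ∨ p + q ≤ #A) : p ≤ #(A \ D) := by
  rcases h with hS | hA
  · have hsafe : A ∩ S ⊆ A \ D :=
      subset_sdiff.2 ⟨inter_subset_left, hDS.symm.mono_left inter_subset_right⟩
    exact hS.trans (card_le_card hsafe)
  · have := le_card_sdiff D A
    omega

lemma exists_subset_sdiff_card_le_card_sdiff_lt {A S : Finset α} {p q : ℕ}
    (hS : #(A ∩ S) < p) (hA : #A < p + q) : ∃ D ⊆ A \ S, #D ≤ q ∧ #(A \ D) < p := by
  obtain ⟨D, hDsub, hDcard⟩ := exists_subset_card_eq (min_le_right q #(A \ S))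
  refine ⟨D, hDsub, hDcard ▸ min_le_left _ _, ?_⟩
  have hsplit := card_inter_add_card_sdiff A S
  have hremove := card_sdiff_of_subset (hDsub.trans sdiff_subset)
  omega

theorem forall_le_card_sdiff_inter_iff [Fintype α] (F S C : Finset α) (p q : ℕ) :
    (∀ F' ⊆ F ∩ Sᶜ, #F' ≤ q → p ≤ #((F \ F') ∩ C)) ↔
      p ≤ #(F ∩ C ∩ S) ∨ p + q ≤ #(F ∩ C) := by
  have hcomm (F' : Finset α) : (F \ F') ∩ C = (F ∩ C) \ F' := sdiff_inf_right_comm ..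
  simp only [hcomm]
  refine ⟨fun h => ?_, fun h F' hF' hq => le_card_sdiff_of_disjoint ?_ hq h⟩
  · by_contra! hlt
    obtain ⟨D, hD, hDq, hDp⟩ := exists_subset_sdiff_card_le_card_sdiff_lt hlt.1 hlt.2
    have hunsafe : (F ∩ C) \ S ⊆ F ∩ Sᶜ := fun e he => by
      simp only [mem_sdiff, mem_inter, mem_compl] at he ⊢
      exact ⟨he.1.1, he.2⟩
    exact (h D (hD.trans hunsafe) hDq).not_gt hDp
  · exact subset_compl_iff_disjoint_right.1 (hF'.trans inter_subset_right)

end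

theorem cut_characterization_general {V ε : Type} [Fintype V] [DecidableEq V]
    [Fintype ε] [DecidableEq ε]
    (ends : ε → V × V)
    (S : Finset ε) (p q : ℕ) (F : Finset ε) :
    (∀ F' : Finset ε, F' ⊆ F ∩ Sᶜ → F'.card ≤ q →
        ∀ R : Finset V, R.Nonempty → R ≠ Finset.univ →
          p ≤ (((F \ F') ∩ cutEdges ends R)).card) ↔
    (∀ R : Finset V, R.Nonempty → R ≠ Finset.univ →
        p ≤ ((F ∩ cutEdges ends R) ∩ S).card ∨ p + q ≤ (F ∩ cutEdges ends R).card) := by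
  simp only [← forall_le_card_sdiff_inter_iff]
  exact ⟨fun h R hR hRu F' hF' hq => h F' hF' hq R hR hRu,
    fun h F' hF' hq R hR hRu => h R hR hRu F' hF' hq⟩

/-- Cut characterization of `(p,q)`-feasibility: `(V, F \ F')` is `p`-edge-connected
(every nontrivial cut has at least `p` edges) for every set `F'` of at most `q` unsafe
edges of `F`, iff every nontrivial cut of `F` has at least `p` safe edges or at least
`p+q` edges in total. -/
theorem cut_characterization {V ε : Type} [Fintype V] [DecidableEq V]
    [Fintype ε] [DecidableEq ε]
    (ends : ε → V × V) (hloopless : ∀ e, (ends e).1 ≠ (ends e).2)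
    (hconn : ∀ R : Finset V, R.Nonempty → R ≠ Finset.univ → (cutEdges ends R).Nonempty)
    (S : Finset ε) (p q : ℕ) (hp : 1 ≤ p) (F : Finset ε) :
    (∀ F' : Finset ε, F' ⊆ F ∩ Sᶜ → F'.card ≤ q →
        ∀ R : Finset V, R.Nonempty → R ≠ Finset.univ →
          p ≤ (((F \ F') ∩ cutEdges ends R)).card) ↔
    (∀ R : Finset V, R.Nonempty → R ≠ Finset.univ →
        p ≤ ((F ∩ cutEdges ends R) ∩ S).card ∨ p + q ≤ (F ∩ cutEdges ends R).card) :=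
  cut_characterization_general ends S p q F
end

section
/- Let G=(V,E) with E = S ⊔ U, and integers p ≥ 1, q ≥ 0. An edge set F ⊆ E is (p,q)-feasible if and only if for every nonempty proper vertex subset R ⊊ V and every partition of F ∩ δ(R) into sets J and K, the inequality max(0, p − |J ∩ S|) · |K| + max(0, q − |J ∩ U|) · |K ∩ S| ≥ max(0, p − |J ∩ S|) · max(0, p + q − |J|) holds. -/
open Finset

lemma card_inter_S_add_compl {ε : Type} [Fintype ε] [DecidableEq ε]
    (J S : Finset ε) : (J ∩ S).card + (J ∩ Sᶜ).card = J.card := by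
  rw [← card_union_of_disjoint, ← inter_union_distrib_left, union_compl, inter_univ]
  exact (disjoint_compl_right.mono inter_subset_right inter_subset_right)

/-- `F` is `(p,q)`-feasible iff for every nontrivial cut and every partition
`F ∩ δ(R) = J ⊔ K`, the knapsack-cover inequality
`(p − |J∩S|)⁺·|K| + (q − |J∩U|)⁺·|K∩S| ≥ (p − |J∩S|)⁺·(p + q − |J|)⁺` holds.
(Truncated subtraction on `ℕ` realizes the `max(0,·)` operation.) -/
theorem feasible_iff_knapsack_cover {V ε : Type} [Fintype V] [DecidableEq V]
    [Fintype ε] [DecidableEq ε]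
    (ends : ε → V × V) (S : Finset ε) (p q : ℕ) (hp : 1 ≤ p) (F : Finset ε) :
    Feasible ends S p q F ↔
      ∀ R : Finset V, R.Nonempty → R ≠ Finset.univ →
        ∀ J K : Finset ε, J ∪ K = F ∩ cutEdges ends R → Disjoint J K →
          (p - (J ∩ S).card) * K.card + (q - (J ∩ Sᶜ).card) * (K ∩ S).card ≥
            (p - (J ∩ S).card) * (p + q - J.card) := by
  constructor
  · intro hF R hR hRu J K hJK hd
    set C := F ∩ cutEdges ends R with hC
    have hcard : J.card + K.card = C.card := by
      rw [← hJK, card_union_of_disjoint hd]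
    have hScard : (J ∩ S).card + (K ∩ S).card = (C ∩ S).card := by
      rw [← hJK, union_inter_distrib_right, card_union_of_disjoint]
      exact hd.mono inter_subset_left inter_subset_left
    have hJsplit := card_inter_S_add_compl J S
    have hKle : (K ∩ S).card ≤ K.card := card_le_card inter_subset_left
    set a := p - (J ∩ S).card with ha
    set b := q - (J ∩ Sᶜ).card with hb
    rcases hF R hR hRu with hcs | hc
    · -- many safe edges in the cut
      rw [← hC] at hcs
      have h1 : a ≤ (K ∩ S).card := by omega
      have h3 : p + q - J.card ≤ a + b := by omega
      calc a * (p + q - J.card) ≤ a * (a + b) := Nat.mul_le_mul_left _ h3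
        _ = a * a + a * b := by ring
        _ ≤ a * K.card + b * (K ∩ S).card := by
            have : a * a ≤ a * K.card := Nat.mul_le_mul_left _ (le_trans h1 hKle)
            have : a * b ≤ b * (K ∩ S).card := by
              rw [Nat.mul_comm b]; exact Nat.mul_le_mul_right _ h1
            omega
    · -- many edges in the cut
      rw [← hC] at hc
      have h1 : p + q - J.card ≤ K.card := by omega
      calc a * (p + q - J.card) ≤ a * K.card := Nat.mul_le_mul_left _ h1
        _ ≤ a * K.card + b * (K ∩ S).card := Nat.le_add_right _ _
  · intro h R hR hRu
    by_contra hcon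
    push_neg at hcon
    obtain ⟨h1, h2⟩ := hcon
    set C := F ∩ cutEdges ends R with hC
    set u := (C ∩ Sᶜ).card with hu
    obtain ⟨J, hJsub, hJcard⟩ := exists_subset_card_eq (min_le_right q u)
    have hJC : J ⊆ C := hJsub.trans inter_subset_left
    have hJS : ∀ e ∈ J, e ∉ S := by
      intro e he hs
      have := hJsub he
      rw [mem_inter, mem_compl] at this
      exact this.2 hs
    have hspec := h R hR hRu J (C \ J) (union_sdiff_of_subset hJC) disjoint_sdiff
    have hJSempty : J ∩ S = ∅ := by
      ext e; simp only [mem_inter, notMem_empty, iff_false, not_and]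
      exact fun he => hJS e he
    have hJScompl : J ∩ Sᶜ = J := by
      apply inter_eq_left.2
      exact hJsub.trans inter_subset_right
    have hKS : (C \ J) ∩ S = C ∩ S := by
      ext e
      simp only [mem_inter, mem_sdiff]
      constructor
      · rintro ⟨⟨h1, _⟩, h2⟩; exact ⟨h1, h2⟩
      · rintro ⟨hc1, hc2⟩; exact ⟨⟨hc1, fun hj => hJS e hj hc2⟩, hc2⟩
    have hKcard : (C \ J).card = C.card - min q u := by
      rw [card_sdiff_of_subset hJC, hJcard]
    have hsplit : (C ∩ S).card + u = C.card := card_inter_S_add_compl C S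
    rw [hJSempty, hJScompl, hKS, hKcard, hJcard, card_empty, Nat.sub_zero] at hspec
    rcases le_or_gt q u with hqu | hqu
    · rw [min_eq_left hqu] at hspec
      have hx : C.card - q < p := by omega
      have hq : q ≤ C.card := by omega
      set x := C.card - q with hxdef
      have : p + q - q = p := by omega
      rw [this, Nat.sub_self, Nat.zero_mul, Nat.add_zero] at hspec
      nlinarith
    · rw [min_eq_right hqu.le] at hspec
      have hcu : C.card - u = (C ∩ S).card := by omega
      have hpq : p + q - u = p + (q - u) := by omega
      rw [hcu, hpq] at hspec
      set w := q - u with hw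
      have hw1 : 1 ≤ w := by omega
      set s := (C ∩ S).card with hs
      nlinarith
end

section
/- Let F ⊆ E be (p,q)-feasible, R a nonempty proper vertex subset, and J ⊆ F ∩ δ(R) with |J ∩ S| < p and |J| < p + q. Set K = (F ∩ δ(R)) \ J. Then (p − |J ∩ S|) · |K| + max(0, q − |J ∩ U|) · |K ∩ S| ≥ (p − |J ∩ S|) · (p + q − |J|). -/
open Finset

/-- For a `(p,q)`-feasible `F`, a nontrivial cut `R` and `J ⊆ F ∩ δ(R)` with
`|J∩S| < p` and `|J| < p+q`, setting `K = (F ∩ δ(R)) \ J`, the knapsack-cover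
inequality holds. -/
theorem knapsack_cover_of_feasible {V ε : Type} [Fintype V] [DecidableEq V]
    [Fintype ε] [DecidableEq ε]
    (ends : ε → V × V) (S : Finset ε) (p q : ℕ) (hp : 1 ≤ p) (F : Finset ε)
    (hF : Feasible ends S p q F)
    (R : Finset V) (hR₁ : R.Nonempty) (hR₂ : R ≠ Finset.univ)
    (J : Finset ε) (hJ : J ⊆ F ∩ cutEdges ends R)
    (hJS : (J ∩ S).card < p) (hJcard : J.card < p + q) :
    (p - (J ∩ S).card) * ((F ∩ cutEdges ends R) \ J).card +
      (q - (J ∩ Sᶜ).card) * (((F ∩ cutEdges ends R) \ J) ∩ S).card ≥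
      (p - (J ∩ S).card) * (p + q - J.card) := by
  set C := F ∩ cutEdges ends R with hC
  have hcard : (C \ J).card + J.card = C.card := Finset.card_sdiff_add_card_eq_card hJ
  have hJS_sub : J ∩ S ⊆ C ∩ S := Finset.inter_subset_inter_right hJ
  have hKS : (C \ J) ∩ S = (C ∩ S) \ (J ∩ S) := by
    ext x
    simp only [Finset.mem_inter, Finset.mem_sdiff]
    tauto
  have hcardS : ((C \ J) ∩ S).card + (J ∩ S).card = (C ∩ S).card := by
    rw [hKS]; exact Finset.card_sdiff_add_card_eq_card hJS_sub
  have hJc : J ∩ Sᶜ = J \ S := by ext x; simp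
  have hJsplit : (J \ S).card + (J ∩ S).card = J.card :=
    Finset.card_sdiff_add_card_inter J S
  rw [hJc]
  set js := (J ∩ S).card
  set jc := (J \ S).card
  set k := (C \ J).card
  set ks := ((C \ J) ∩ S).card
  have hks_le_k : ks ≤ k := Finset.card_le_card (Finset.inter_subset_left)
  rcases hF R hR₁ hR₂ with h | h <;> rw [← hC] at h
  · -- p ≤ (C ∩ S).card
    have h1 : p - js ≤ ks := by omega
    have h2 : p + q - J.card ≤ (p - js) + (q - jc) := by omega
    calc (p - js) * (p + q - J.card) ≤ (p - js) * ((p - js) + (q - jc)) :=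
          Nat.mul_le_mul_left _ h2
      _ = (p - js) * (p - js) + (p - js) * (q - jc) := by ring
      _ ≤ (p - js) * k + (q - jc) * ks := by
          have : (p - js) * (p - js) ≤ (p - js) * k :=
            Nat.mul_le_mul_left _ (le_trans h1 hks_le_k)
          have : (p - js) * (q - jc) ≤ (q - jc) * ks := by
            rw [Nat.mul_comm]; exact Nat.mul_le_mul_left _ h1
          omega
  · -- p + q ≤ C.card
    have h1 : p + q - J.card ≤ k := by omega
    calc (p - js) * (p + q - J.card) ≤ (p - js) * k := Nat.mul_le_mul_left _ h1
      _ ≤ (p - js) * k + (q - jc) * ks := Nat.le_add_right _ _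
end

section
/- Let x ∈ [0,1]^E, and let R be a nonempty proper vertex subset with (p+q)·x(δ(R) ∩ S) + p·x(δ(R) ∩ U) ≥ 2p(p+q). Then for every subset J ⊆ δ(R), writing K = δ(R) \ J, the inequality max(0, p − |J ∩ S|)·x(K) + max(0, q − |J ∩ U|)·x(K ∩ S) ≥ max(0, p − |J ∩ S|)·max(0, p + q − |J|) holds. -/
open Finset

lemma key_cover (p q a b s u t w B : ℝ)
    (hp : 1 ≤ p) (hq : 0 ≤ q) (ha0 : 0 ≤ a)
    (hap : a + 1 ≤ p) (hB0 : 0 ≤ B) (hBq : q - b ≤ B)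
    (ht0 : 0 ≤ t) (hw0 : 0 ≤ w) (hts : s - a ≤ t) (hwu : u - b ≤ w)
    (hcap : 2 * p * (p + q) ≤ (p + q) * s + p * u) :
    (p - a) * (p + q - (a + b)) ≤ (p - a) * (t + w) + B * t := by
  have hA : (0:ℝ) < p - a := by linarith
  rcases le_or_gt p s with hps | hps
  · nlinarith [mul_nonneg (add_nonneg hA.le hB0) (by linarith : (0:ℝ) ≤ t - (p - a)),
      mul_nonneg hA.le hw0,
      mul_nonneg hA.le (by linarith : (0:ℝ) ≤ (p - a) + B - (p + q - (a + b)))]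
  · have hu : 2 * p * (p + q) - (p + q) * s ≤ p * u := by linarith
    rcases le_or_gt s a with hsa | hsa
    · have hw' : p + q - a - b ≤ w := by
        nlinarith [mul_le_mul_of_nonneg_left hwu (by linarith : (0:ℝ) ≤ p),
          mul_nonneg (by linarith : (0:ℝ) ≤ p + q) (by linarith : (0:ℝ) ≤ a - s),
          mul_nonneg hq (by linarith : (0:ℝ) ≤ p - a), sq_nonneg p]
      nlinarith [mul_nonneg hA.le (by linarith : (0:ℝ) ≤ w - (p + q - a - b)),
        mul_nonneg hA.le ht0, mul_nonneg hB0 ht0]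
    · have hqa : 0 ≤ p * (p + q) - q * a := by
        nlinarith [mul_nonneg hq (by linarith : (0:ℝ) ≤ p - a), sq_nonneg p]
      have h1 : 0 ≤ p * ((p - a) + B) * (t - (s - a)) :=
        mul_nonneg (mul_nonneg (by linarith) (by linarith)) (by linarith)
      have h2 : 0 ≤ p * (p - a) * (w - (u - b)) :=
        mul_nonneg (mul_nonneg (by linarith) hA.le) (by linarith)
      have h3 : 0 ≤ (p - a) * (p * u - (2 * p * (p + q) - (p + q) * s)) :=
        mul_nonneg hA.le (by linarith)
      rcases le_or_gt ((p - a) * (p + q)) (p * ((p - a) + B)) with hc | hc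
      · nlinarith [mul_nonneg (by linarith : (0:ℝ) ≤ p * ((p - a) + B) - (p - a) * (p + q))
            (by linarith : (0:ℝ) ≤ s - a),
          mul_nonneg hA.le hqa, h1, h2, h3]
      · nlinarith [mul_nonneg (by linarith : (0:ℝ) ≤ (p - a) * (p + q) - p * ((p - a) + B))
            (by linarith : (0:ℝ) ≤ p - s),
          mul_nonneg (mul_nonneg (by linarith : (0:ℝ) ≤ p) hA.le) (add_nonneg hA.le hB0),
          mul_nonneg (mul_nonneg (by linarith : (0:ℝ) ≤ p) hA.le) ha0, h1, h2, h3]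


/-- If a nontrivial cut has capacity `(p+q)·x(δ(R)∩S) + p·x(δ(R)∩U) ≥ 2p(p+q)`, then
the knapsack-cover inequality holds for every `J ⊆ δ(R)` with `K = δ(R) \ J`. -/
theorem knapsack_cover_of_large_cut {V ε : Type} [Fintype V] [DecidableEq V]
    [Fintype ε] [DecidableEq ε]
    (ends : ε → V × V) (S : Finset ε) (p q : ℕ) (hp : 1 ≤ p)
    (x : ε → ℝ) (hx : ∀ e, 0 ≤ x e ∧ x e ≤ 1)
    (R : Finset V) (hR₁ : R.Nonempty) (hR₂ : R ≠ Finset.univ)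
    (hcap : ((p : ℝ) + q) * ∑ e ∈ cutEdges ends R ∩ S, x e +
        (p : ℝ) * ∑ e ∈ cutEdges ends R ∩ Sᶜ, x e ≥ 2 * p * (p + q)) :
    ∀ J ⊆ cutEdges ends R,
      ((p - (J ∩ S).card : ℕ) : ℝ) * ∑ e ∈ cutEdges ends R \ J, x e +
        ((q - (J ∩ Sᶜ).card : ℕ) : ℝ) * ∑ e ∈ (cutEdges ends R \ J) ∩ S, x e ≥
        ((p - (J ∩ S).card : ℕ) : ℝ) * ((p + q - J.card : ℕ) : ℝ) := by
  intro J hJ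
  set D := cutEdges ends R with hDdef
  -- sum splittings
  have hunion : ∀ T : Finset ε, (J ∩ T) ∪ ((D \ J) ∩ T) = D ∩ T := fun T => by
    rw [← Finset.union_inter_distrib_right, Finset.union_sdiff_of_subset hJ]
  have hdisj : ∀ T : Finset ε, Disjoint (J ∩ T) ((D \ J) ∩ T) := fun T =>
    Finset.disjoint_sdiff.mono Finset.inter_subset_left Finset.inter_subset_left
  have hsum : ∀ T : Finset ε, ∑ e ∈ D ∩ T, x e
      = ∑ e ∈ J ∩ T, x e + ∑ e ∈ (D \ J) ∩ T, x e := fun T => by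
    rw [← hunion T, Finset.sum_union (hdisj T)]
  have hKsum : ∑ e ∈ D \ J, x e
      = ∑ e ∈ (D \ J) ∩ S, x e + ∑ e ∈ (D \ J) ∩ Sᶜ, x e := by
    rw [show (D \ J) ∩ Sᶜ = (D \ J) \ S from sdiff_eq.symm,
      Finset.sum_inter_add_sum_sdiff]
  -- nonnegativity and bounds
  have hnn : ∀ T : Finset ε, (0:ℝ) ≤ ∑ e ∈ T, x e := fun T =>
    Finset.sum_nonneg fun e _ => (hx e).1
  have hle : ∀ T : Finset ε, ∑ e ∈ T, x e ≤ (T.card : ℝ) := fun T => by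
    calc ∑ e ∈ T, x e ≤ ∑ e ∈ T, (1:ℝ) := Finset.sum_le_sum fun e _ => (hx e).2
    _ = T.card := by simp
  have hcard : (J ∩ S).card + (J ∩ Sᶜ).card = J.card := by
    rw [show J ∩ Sᶜ = J \ S from sdiff_eq.symm]
    exact Finset.card_inter_add_card_sdiff J S
  by_cases h1 : p ≤ (J ∩ S).card
  · rw [Nat.sub_eq_zero_of_le h1]
    push_cast
    have := mul_nonneg (Nat.cast_nonneg (α := ℝ) (q - (J ∩ Sᶜ).card))
      (hnn ((D \ J) ∩ S))
    simpa using by linarith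
  by_cases h2 : p + q ≤ J.card
  · rw [Nat.sub_eq_zero_of_le h2]
    push_cast
    have h3 := mul_nonneg (Nat.cast_nonneg (α := ℝ) (q - (J ∩ Sᶜ).card))
      (hnn ((D \ J) ∩ S))
    have h4 := mul_nonneg (Nat.cast_nonneg (α := ℝ) (p - (J ∩ S).card))
      (hnn (D \ J))
    simpa using by linarith
  push_neg at h1 h2
  have hA : ((p - (J ∩ S).card : ℕ) : ℝ) = (p : ℝ) - (J ∩ S).card := by
    push_cast [Nat.cast_sub h1.le]; ring
  have hG : ((p + q - J.card : ℕ) : ℝ) = (p : ℝ) + q - J.card := by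
    push_cast [Nat.cast_sub h2.le]; ring
  have hBq : (q : ℝ) - (J ∩ Sᶜ).card ≤ ((q - (J ∩ Sᶜ).card : ℕ) : ℝ) := by
    rcases le_total (J ∩ Sᶜ).card q with h | h
    · rw [Nat.cast_sub h]
    · rw [Nat.sub_eq_zero_of_le h]
      have : (q:ℝ) ≤ ((J ∩ Sᶜ).card : ℝ) := by exact_mod_cast h
      simpa using by linarith
  rw [hA, hG, hKsum, ge_iff_le]
  have hKJ : ((p:ℝ) + q - J.card) = (p:ℝ) + q - (((J ∩ S).card : ℝ) + ((J ∩ Sᶜ).card : ℝ)) := by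
    rw [← hcard]; push_cast; ring
  rw [hKJ]
  have hcapS := hsum S
  have hcapU := hsum Sᶜ
  have := key_cover p q ((J ∩ S).card) ((J ∩ Sᶜ).card)
    (∑ e ∈ D ∩ S, x e) (∑ e ∈ D ∩ Sᶜ, x e)
    (∑ e ∈ (D \ J) ∩ S, x e) (∑ e ∈ (D \ J) ∩ Sᶜ, x e)
    ((q - (J ∩ Sᶜ).card : ℕ) : ℝ)
    (by exact_mod_cast hp) (Nat.cast_nonneg q) (Nat.cast_nonneg _)
    (by exact_mod_cast Nat.succ_le_of_lt h1) (Nat.cast_nonneg _) hBq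
    (hnn _) (hnn _)
    (by have := hle (J ∩ S); linarith [hcapS])
    (by have := hle (J ∩ Sᶜ); linarith [hcapU])
    (by linarith [hcap])
  linarith [this]
end

section
/- Let x ∈ [0,1]^E, R a nontrivial vertex subset, and J ⊆ δ(R) with |J ∩ S| < p and |J| < p + q. If x(δ(R) ∩ S) ≥ p, then with K = δ(R) \ J: (p − |J ∩ S|)·x(K) + max(0, q − |J ∩ U|)·x(K ∩ S) ≥ (p − |J ∩ S|)·(p + q − |J|). -/
open Finset

/-- If `x(δ(R)∩S) ≥ p` then for any `J ⊆ δ(R)` with `|J∩S| < p` and `|J| < p+q`,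
setting `K = δ(R) \ J`, the knapsack-cover inequality holds. -/
theorem knapsack_cover_of_many_safe {V ε : Type} [Fintype V] [DecidableEq V]
    [Fintype ε] [DecidableEq ε]
    (ends : ε → V × V) (S : Finset ε) (p q : ℕ) (hp : 1 ≤ p)
    (x : ε → ℝ) (hx : ∀ e, 0 ≤ x e ∧ x e ≤ 1)
    (R : Finset V) (hR₁ : R.Nonempty) (hR₂ : R ≠ Finset.univ)
    (J : Finset ε) (hJ : J ⊆ cutEdges ends R)
    (hJS : (J ∩ S).card < p) (hJcard : J.card < p + q)
    (hsafe : (p : ℝ) ≤ ∑ e ∈ cutEdges ends R ∩ S, x e) :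
    ((p - (J ∩ S).card : ℕ) : ℝ) * ∑ e ∈ cutEdges ends R \ J, x e +
      ((q - (J ∩ Sᶜ).card : ℕ) : ℝ) * ∑ e ∈ (cutEdges ends R \ J) ∩ S, x e ≥
      ((p - (J ∩ S).card : ℕ) : ℝ) * ((p + q - J.card : ℕ) : ℝ) := by
  set D := cutEdges ends R with hD
  -- split D ∩ S
  have hsplit : D ∩ S = ((D \ J) ∩ S) ∪ (J ∩ S) := by
    ext e
    simp only [mem_inter, mem_union, mem_sdiff]
    constructor
    · rintro ⟨hd, hs⟩
      by_cases h : e ∈ J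
      · exact Or.inr ⟨h, hs⟩
      · exact Or.inl ⟨⟨hd, h⟩, hs⟩
    · rintro (⟨⟨hd, _⟩, hs⟩ | ⟨hj, hs⟩)
      · exact ⟨hd, hs⟩
      · exact ⟨hJ hj, hs⟩
  have hdisj : Disjoint ((D \ J) ∩ S) (J ∩ S) := by
    refine Finset.disjoint_left.2 ?_
    rintro e he1 he2
    simp only [mem_inter, mem_sdiff] at he1 he2
    exact he1.1.2 he2.1
  have hsum : ∑ e ∈ D ∩ S, x e = ∑ e ∈ (D \ J) ∩ S, x e + ∑ e ∈ J ∩ S, x e := by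
    rw [hsplit, Finset.sum_union hdisj]
  have hJSsum : ∑ e ∈ J ∩ S, x e ≤ ((J ∩ S).card : ℝ) := by
    calc ∑ e ∈ J ∩ S, x e ≤ ∑ _e ∈ J ∩ S, (1 : ℝ) :=
          Finset.sum_le_sum fun e _ => (hx e).2
      _ = ((J ∩ S).card : ℝ) := by simp
  -- x(K∩S) ≥ p - |J∩S|
  have hKS : ((p : ℝ) - (J ∩ S).card) ≤ ∑ e ∈ (D \ J) ∩ S, x e := by
    have := hsafe
    rw [hsum] at this
    linarith
  have hKSnonneg : (0 : ℝ) ≤ ∑ e ∈ (D \ J) ∩ S, x e :=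
    Finset.sum_nonneg fun e _ => (hx e).1
  have hKge : ∑ e ∈ (D \ J) ∩ S, x e ≤ ∑ e ∈ D \ J, x e :=
    Finset.sum_le_sum_of_subset_of_nonneg (Finset.inter_subset_left)
      (fun e _ _ => (hx e).1)
  -- cardinality facts
  have hcardJ : (J ∩ S).card + (J ∩ Sᶜ).card = J.card := by
    rw [← Finset.card_union_of_disjoint]
    · congr 1
      ext e; simp [mem_inter]; tauto
    · refine Finset.disjoint_left.2 ?_
      intro e he1 he2
      simp only [mem_inter, mem_compl] at he1 he2
      exact he2.2 he1.2
  have hnat : (p + q - J.card : ℕ) ≤ (p - (J ∩ S).card) + (q - (J ∩ Sᶜ).card) := by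
    omega
  have ha1 : (1 : ℕ) ≤ p - (J ∩ S).card := by omega
  set a : ℕ := p - (J ∩ S).card with hadef
  set b : ℕ := q - (J ∩ Sᶜ).card with hbdef
  have hacast : (a : ℝ) = (p : ℝ) - (J ∩ S).card := by
    rw [hadef]; exact Nat.cast_sub hJS.le
  have haR : (1 : ℝ) ≤ (a : ℝ) := by exact_mod_cast ha1
  have hcast2 : ((p + q - J.card : ℕ) : ℝ) ≤ (a : ℝ) + (b : ℝ) := by
    exact_mod_cast hnat
  have hbR : (0 : ℝ) ≤ (b : ℝ) := Nat.cast_nonneg _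
  -- now combine
  have h1 : (a : ℝ) ≤ ∑ e ∈ (D \ J) ∩ S, x e := by rw [hacast]; exact hKS
  nlinarith [mul_le_mul_of_nonneg_left hKge (le_trans zero_le_one haR),
    mul_le_mul_of_nonneg_left h1 hbR,
    mul_le_mul_of_nonneg_left h1 (le_trans zero_le_one haR)]
end

section
/- Let x ∈ [0,1]^E, R a nontrivial vertex subset, and J ⊆ δ(R) with |J ∩ S| < p and |J| < p + q. If x(δ(R) ∩ U) ≥ p + q, then with K = δ(R) \ J: (p − |J ∩ S|)·x(K) + max(0, q − |J ∩ U|)·x(K ∩ S) ≥ (p − |J ∩ S|)·(p + q − |J|). -/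
open Finset

/-- If `x(δ(R)∩U) ≥ p+q` then for any `J ⊆ δ(R)` with `|J∩S| < p` and `|J| < p+q`,
setting `K = δ(R) \ J`, the knapsack-cover inequality holds. -/
theorem knapsack_cover_of_many_unsafe {V ε : Type} [Fintype V] [DecidableEq V]
    [Fintype ε] [DecidableEq ε]
    (ends : ε → V × V) (S : Finset ε) (p q : ℕ) (hp : 1 ≤ p)
    (x : ε → ℝ) (hx : ∀ e, 0 ≤ x e ∧ x e ≤ 1)
    (R : Finset V) (hR₁ : R.Nonempty) (hR₂ : R ≠ Finset.univ)
    (J : Finset ε) (hJ : J ⊆ cutEdges ends R)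
    (hJS : (J ∩ S).card < p) (hJcard : J.card < p + q)
    (hunsafe : (p : ℝ) + q ≤ ∑ e ∈ cutEdges ends R ∩ Sᶜ, x e) :
    ((p - (J ∩ S).card : ℕ) : ℝ) * ∑ e ∈ cutEdges ends R \ J, x e +
      ((q - (J ∩ Sᶜ).card : ℕ) : ℝ) * ∑ e ∈ (cutEdges ends R \ J) ∩ S, x e ≥
      ((p - (J ∩ S).card : ℕ) : ℝ) * ((p + q - J.card : ℕ) : ℝ) := by
  set D := cutEdges ends R
  have hD : (p : ℝ) + q ≤ ∑ e ∈ D, x e := by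
    refine hunsafe.trans (Finset.sum_le_sum_of_subset_of_nonneg (Finset.inter_subset_left)
      fun e _ _ => (hx e).1)
  have hJx : ∑ e ∈ J, x e ≤ (J.card : ℝ) := by
    calc ∑ e ∈ J, x e ≤ ∑ _e ∈ J, (1 : ℝ) := Finset.sum_le_sum fun e _ => (hx e).2
    _ = J.card := by simp
  have hsplit : ∑ e ∈ D \ J, x e = ∑ e ∈ D, x e - ∑ e ∈ J, x e :=
    Finset.sum_sdiff_eq_sub hJ
  have h1 : ((p + q - J.card : ℕ) : ℝ) ≤ ∑ e ∈ D \ J, x e := by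
    rw [Nat.cast_sub hJcard.le, hsplit]
    push_cast
    linarith
  have ha : (0 : ℝ) ≤ ((p - (J ∩ S).card : ℕ) : ℝ) := Nat.cast_nonneg _
  have h2 : (0 : ℝ) ≤ ∑ e ∈ (D \ J) ∩ S, x e :=
    Finset.sum_nonneg fun e _ => (hx e).1
  have h3 : (0 : ℝ) ≤ ((q - (J ∩ Sᶜ).card : ℕ) : ℝ) := Nat.cast_nonneg _
  nlinarith [mul_le_mul_of_nonneg_left h1 ha, mul_nonneg h3 h2]
end

section
/- Fix a nontrivial vertex subset R and x ∈ [0,1]^{δ(R)}. For each pair (a,b) with 0 ≤ a ≤ min(p−1, |δ(R)∩S|) and 0 ≤ b ≤ min(p+q−1, |δ(R)∩U|), let J_{a,b} consist of the a safe edges of δ(R) with largest x-values and the b unsafe edges of δ(R) with largest x-values. If the knapsack-cover inequality max(0,p−|J∩S|)·x(δ(R)\J) + max(0,q−|J∩U|)·x((δ(R)\J)∩S) ≥ max(0,p−|J∩S|)·max(0,p+q−|J|) holds for J = J_{a,b} for every such pair (a,b), then it holds for every subset J ⊆ δ(R). -/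
open Finset

/-- The knapsack-cover inequality for the cut `D`, the set-aside set `J`, and the
fractional vector `x`; truncated `ℕ`-subtraction realizes `max(0,·)`. -/
def KCIneq {ε : Type} [Fintype ε] [DecidableEq ε]
    (S : Finset ε) (p q : ℕ) (x : ε → ℝ) (D J : Finset ε) : Prop :=
  ((p - (J ∩ S).card : ℕ) : ℝ) * ∑ e ∈ D \ J, x e +
    ((q - (J ∩ Sᶜ).card : ℕ) : ℝ) * ∑ e ∈ (D \ J) ∩ S, x e ≥
    ((p - (J ∩ S).card : ℕ) : ℝ) * ((p + q - J.card : ℕ) : ℝ)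

/-- If the knapsack-cover inequality holds for every `J_{a,b}` consisting of `a` safe
and `b` unsafe edges of the cut with the largest `x`-values (i.e. minimizing the
remaining `x`-weight among sets of the same cardinality), for all admissible `a, b`,
then it holds for every `J ⊆ δ(R)`. -/
theorem knapsack_cover_en_masse {V ε : Type} [Fintype V] [DecidableEq V]
    [Fintype ε] [DecidableEq ε]
    (ends : ε → V × V) (S : Finset ε) (p q : ℕ) (hp : 1 ≤ p)
    (x : ε → ℝ) (hx : ∀ e, 0 ≤ x e ∧ x e ≤ 1)
    (R : Finset V) (hR₁ : R.Nonempty) (hR₂ : R ≠ Finset.univ)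
    (hab : ∀ a b : ℕ, a ≤ min (p - 1) (cutEdges ends R ∩ S).card →
      b ≤ min (p + q - 1) (cutEdges ends R ∩ Sᶜ).card →
      ∀ Js ⊆ cutEdges ends R ∩ S, Js.card = a →
        (∀ Js' ⊆ cutEdges ends R ∩ S, Js'.card = a →
          ∑ e ∈ (cutEdges ends R ∩ S) \ Js, x e ≤ ∑ e ∈ (cutEdges ends R ∩ S) \ Js', x e) →
      ∀ Ju ⊆ cutEdges ends R ∩ Sᶜ, Ju.card = b →
        (∀ Ju' ⊆ cutEdges ends R ∩ Sᶜ, Ju'.card = b →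
          ∑ e ∈ (cutEdges ends R ∩ Sᶜ) \ Ju, x e ≤ ∑ e ∈ (cutEdges ends R ∩ Sᶜ) \ Ju', x e) →
      KCIneq S p q x (cutEdges ends R) (Js ∪ Ju)) :
    ∀ J ⊆ cutEdges ends R, KCIneq S p q x (cutEdges ends R) J := by

  intro J hJ
  set D := cutEdges ends R with hD
  have hsum_nonneg : ∀ T : Finset ε, (0:ℝ) ≤ ∑ e ∈ T, x e :=
    fun T => Finset.sum_nonneg fun e _ => (hx e).1
  by_cases hps : p ≤ (J ∩ S).card
  · unfold KCIneq
    rw [Nat.sub_eq_zero_of_le hps]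
    simp only [Nat.cast_zero, zero_mul, zero_add, ge_iff_le]
    exact mul_nonneg (Nat.cast_nonneg _) (hsum_nonneg _)
  by_cases hpq : p + q ≤ J.card
  · unfold KCIneq
    rw [Nat.sub_eq_zero_of_le hpq]
    simp only [Nat.cast_zero, mul_zero, ge_iff_le]
    have := mul_nonneg (Nat.cast_nonneg (p - (J ∩ S).card) : (0:ℝ) ≤ _) (hsum_nonneg (D \ J))
    have := mul_nonneg (Nat.cast_nonneg (q - (J ∩ Sᶜ).card) : (0:ℝ) ≤ _) (hsum_nonneg ((D \ J) ∩ S))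
    linarith
  push_neg at hps hpq
  set a := (J ∩ S).card with ha
  set b := (J ∩ Sᶜ).card with hb
  have hcardJ : a + b = J.card := by
    rw [ha, hb, ← Finset.card_union_of_disjoint, ← Finset.inter_union_distrib_left,
      Finset.union_compl, Finset.inter_univ]
    exact Finset.disjoint_of_subset_left Finset.inter_subset_right
      (Finset.disjoint_of_subset_right Finset.inter_subset_right disjoint_compl_right)
  have hJsub : J ∩ S ⊆ D ∩ S := Finset.inter_subset_inter hJ (Finset.Subset.refl S)
  have hJusub : J ∩ Sᶜ ⊆ D ∩ Sᶜ := Finset.inter_subset_inter hJ (Finset.Subset.refl Sᶜ)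
  have haA : a ≤ (D ∩ S).card := Finset.card_le_card hJsub
  have hbB : b ≤ (D ∩ Sᶜ).card := Finset.card_le_card hJusub
  have haP : a ≤ p - 1 := Nat.le_sub_one_of_lt hps
  have hbP : b ≤ p + q - 1 := Nat.le_sub_one_of_lt (lt_of_le_of_lt (by omega) hpq)
  obtain ⟨Js, hJsmem, hJsmin⟩ := Finset.exists_min_image ((D ∩ S).powersetCard a)
    (fun K => ∑ e ∈ (D ∩ S) \ K, x e)
    ((Finset.powersetCard_nonempty).2 haA)
  obtain ⟨Ju, hJumem, hJumin⟩ := Finset.exists_min_image ((D ∩ Sᶜ).powersetCard b)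
    (fun K => ∑ e ∈ (D ∩ Sᶜ) \ K, x e)
    ((Finset.powersetCard_nonempty).2 hbB)
  rw [Finset.mem_powersetCard] at hJsmem hJumem
  obtain ⟨hJsSub, hJsCard⟩ := hJsmem
  obtain ⟨hJuSub, hJuCard⟩ := hJumem
  have hKC := hab a b (le_min haP haA) (le_min hbP hbB) Js hJsSub hJsCard
    (fun K hK hKc => hJsmin K (Finset.mem_powersetCard.2 ⟨hK, hKc⟩))
    Ju hJuSub hJuCard
    (fun K hK hKc => hJumin K (Finset.mem_powersetCard.2 ⟨hK, hKc⟩))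
  -- facts about Js ∪ Ju
  have hJsS : Js ⊆ S := hJsSub.trans Finset.inter_subset_right
  have hJuS : Ju ⊆ Sᶜ := hJuSub.trans Finset.inter_subset_right
  have hdisj : Disjoint Js Ju :=
    Finset.disjoint_of_subset_left hJsS (Finset.disjoint_of_subset_right hJuS disjoint_compl_right)
  have hstarS : (Js ∪ Ju) ∩ S = Js := by
    ext e
    have h1 := @hJsS e
    have h2 := @hJuS e
    simp only [Finset.mem_inter, Finset.mem_union, Finset.mem_compl] at *
    tauto
  have hstarU : (Js ∪ Ju) ∩ Sᶜ = Ju := by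
    ext e
    have h1 := @hJsS e
    have h2 := @hJuS e
    simp only [Finset.mem_inter, Finset.mem_union, Finset.mem_compl] at *
    tauto
  have hstarCard : (Js ∪ Ju).card = a + b := by
    rw [Finset.card_union_of_disjoint hdisj, hJsCard, hJuCard]
  -- decomposition facts
  have decompS : ∀ K : Finset ε, (D \ K) ∩ S = (D ∩ S) \ (K ∩ S) := by
    intro K; ext e
    simp only [Finset.mem_inter, Finset.mem_sdiff, Finset.mem_inter]
    tauto
  have decompSum : ∀ K : Finset ε,
      (∑ e ∈ D \ K, x e) = (∑ e ∈ (D ∩ S) \ (K ∩ S), x e) + ∑ e ∈ (D ∩ Sᶜ) \ (K ∩ Sᶜ), x e := by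
    intro K
    have heq : D \ K = ((D ∩ S) \ (K ∩ S)) ∪ ((D ∩ Sᶜ) \ (K ∩ Sᶜ)) := by
      ext e
      simp only [Finset.mem_sdiff, Finset.mem_union, Finset.mem_inter, Finset.mem_compl]
      tauto
    rw [heq, Finset.sum_union]
    exact Finset.disjoint_of_subset_left (Finset.sdiff_subset.trans Finset.inter_subset_right)
      (Finset.disjoint_of_subset_right (Finset.sdiff_subset.trans Finset.inter_subset_right)
        disjoint_compl_right)
  -- unfold the inequality for Js ∪ Ju
  unfold KCIneq at hKC ⊢
  rw [hstarS, hstarU, hJsCard, hJuCard, hstarCard, decompS, decompSum, hstarS, hstarU] at hKC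
  rw [decompS, decompSum, ← ha, ← hb, ← hcardJ]
  have hminS : ∑ e ∈ (D ∩ S) \ Js, x e ≤ ∑ e ∈ (D ∩ S) \ (J ∩ S), x e :=
    hJsmin _ (Finset.mem_powersetCard.2 ⟨hJsub, rfl⟩)
  have hminU : ∑ e ∈ (D ∩ Sᶜ) \ Ju, x e ≤ ∑ e ∈ (D ∩ Sᶜ) \ (J ∩ Sᶜ), x e :=
    hJumin _ (Finset.mem_powersetCard.2 ⟨hJusub, rfl⟩)
  have hc1 : (0:ℝ) ≤ ((p - a : ℕ) : ℝ) := Nat.cast_nonneg _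
  have hc2 : (0:ℝ) ≤ ((q - b : ℕ) : ℝ) := Nat.cast_nonneg _
  nlinarith [mul_le_mul_of_nonneg_left hminS hc1, mul_le_mul_of_nonneg_left hminU hc1,
    mul_le_mul_of_nonneg_left hminS hc2]
end

section
/- Let x ∈ [0,1]^E and let R be a nontrivial vertex subset such that (p+q)·x(δ(R)∩S) + p·x(δ(R)∩U) ≥ ℓ·p(p+q) for some real ℓ ≥ 4. Let J ⊆ δ(R) satisfy |J ∩ S| < p and |J| < p+q, and set K = δ(R) \ J. Then x(K ∩ S) ≥ ℓp/4 or x(K ∩ U) ≥ ℓ(p+q)/4. -/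
open Finset

/-- If a nontrivial cut has capacity at least `ℓ·p(p+q)` for some real `ℓ ≥ 4`, and
`J ⊆ δ(R)` has `|J∩S| < p` and `|J| < p+q`, then with `K = δ(R) \ J` we have
`x(K∩S) ≥ ℓp/4` or `x(K∩U) ≥ ℓ(p+q)/4`. -/
theorem residual_weight_of_very_large_cut {V ε : Type} [Fintype V] [DecidableEq V]
    [Fintype ε] [DecidableEq ε]
    (ends : ε → V × V) (S : Finset ε) (p q : ℕ) (hp : 1 ≤ p)
    (x : ε → ℝ) (hx : ∀ e, 0 ≤ x e ∧ x e ≤ 1)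
    (R : Finset V) (hR₁ : R.Nonempty) (hR₂ : R ≠ Finset.univ)
    (ℓ : ℝ) (hℓ : 4 ≤ ℓ)
    (hcap : ((p : ℝ) + q) * ∑ e ∈ cutEdges ends R ∩ S, x e +
        (p : ℝ) * ∑ e ∈ cutEdges ends R ∩ Sᶜ, x e ≥ ℓ * (p * (p + q)))
    (J : Finset ε) (hJ : J ⊆ cutEdges ends R)
    (hJS : (J ∩ S).card < p) (hJcard : J.card < p + q) :
    ℓ * p / 4 ≤ ∑ e ∈ (cutEdges ends R \ J) ∩ S, x e ∨
      ℓ * ((p : ℝ) + q) / 4 ≤ ∑ e ∈ (cutEdges ends R \ J) ∩ Sᶜ, x e := by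
  by_contra h
  push_neg at h
  obtain ⟨h1, h2⟩ := h
  set D := cutEdges ends R with hD
  have hsplitS : D ∩ S = (D \ J) ∩ S ∪ (J ∩ S) := by
    ext e
    simp only [Finset.mem_inter, Finset.mem_union, Finset.mem_sdiff]
    constructor
    · rintro ⟨hd, hs⟩
      by_cases hj : e ∈ J
      · exact Or.inr ⟨hj, hs⟩
      · exact Or.inl ⟨⟨hd, hj⟩, hs⟩
    · rintro (⟨⟨hd, _⟩, hs⟩ | ⟨hj, hs⟩)
      · exact ⟨hd, hs⟩
      · exact ⟨hJ hj, hs⟩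
  have hsplitU : D ∩ Sᶜ = (D \ J) ∩ Sᶜ ∪ (J ∩ Sᶜ) := by
    ext e
    simp only [Finset.mem_inter, Finset.mem_union, Finset.mem_sdiff]
    constructor
    · rintro ⟨hd, hs⟩
      by_cases hj : e ∈ J
      · exact Or.inr ⟨hj, hs⟩
      · exact Or.inl ⟨⟨hd, hj⟩, hs⟩
    · rintro (⟨⟨hd, _⟩, hs⟩ | ⟨hj, hs⟩)
      · exact ⟨hd, hs⟩
      · exact ⟨hJ hj, hs⟩
  have hdisjS : Disjoint ((D \ J) ∩ S) (J ∩ S) := by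
    apply Finset.disjoint_left.mpr
    intro e he hj
    simp only [Finset.mem_inter, Finset.mem_sdiff] at he hj
    exact he.1.2 hj.1
  have hdisjU : Disjoint ((D \ J) ∩ Sᶜ) (J ∩ Sᶜ) := by
    apply Finset.disjoint_left.mpr
    intro e he hj
    simp only [Finset.mem_inter, Finset.mem_sdiff] at he hj
    exact he.1.2 hj.1
  have hsumS : ∑ e ∈ D ∩ S, x e = ∑ e ∈ (D \ J) ∩ S, x e + ∑ e ∈ J ∩ S, x e := by
    rw [hsplitS, Finset.sum_union hdisjS]
  have hsumU : ∑ e ∈ D ∩ Sᶜ, x e = ∑ e ∈ (D \ J) ∩ Sᶜ, x e + ∑ e ∈ J ∩ Sᶜ, x e := by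
    rw [hsplitU, Finset.sum_union hdisjU]
  have hJSsum : ∑ e ∈ J ∩ S, x e ≤ ((J ∩ S).card : ℝ) := by
    calc ∑ e ∈ J ∩ S, x e ≤ ∑ _e ∈ J ∩ S, (1 : ℝ) :=
          Finset.sum_le_sum fun e _ => (hx e).2
      _ = ((J ∩ S).card : ℝ) := by simp
  have hJUsum : ∑ e ∈ J ∩ Sᶜ, x e ≤ (J.card : ℝ) := by
    calc ∑ e ∈ J ∩ Sᶜ, x e ≤ ∑ _e ∈ J ∩ Sᶜ, (1 : ℝ) :=
          Finset.sum_le_sum fun e _ => (hx e).2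
      _ = ((J ∩ Sᶜ).card : ℝ) := by simp
      _ ≤ (J.card : ℝ) := by
          exact_mod_cast Finset.card_le_card (Finset.inter_subset_left)
  have hJS' : ((J ∩ S).card : ℝ) ≤ (p : ℝ) - 1 := by
    have : (J ∩ S).card + 1 ≤ p := hJS
    have := (Nat.cast_le (α := ℝ)).mpr this
    push_cast at this
    linarith
  have hJc' : (J.card : ℝ) ≤ (p : ℝ) + q - 1 := by
    have : J.card + 1 ≤ p + q := hJcard
    have := (Nat.cast_le (α := ℝ)).mpr this
    push_cast at this
    linarith
  have hp' : (1 : ℝ) ≤ (p : ℝ) := by exact_mod_cast hp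
  have hq' : (0 : ℝ) ≤ (q : ℝ) := Nat.cast_nonneg q
  nlinarith [hcap, hsumS, hsumU, h1, h2, hJSsum, hJUsum, hJS', hJc',
    mul_pos (lt_of_lt_of_le one_pos hp') (lt_of_lt_of_le one_pos (by linarith : (1:ℝ) ≤ (p:ℝ)+q))]
end

section
/- Let F be a random edge set obtained by independently including each edge e of G with probability y_e, and suppose that for every nontrivial vertex subset R the probability that both |F∩δ(R)∩S| < p and |F∩δ(R)| < p+q occur is at most n^{−10}; suppose moreover the number of nontrivial cuts R with capacity below 4p(p+q) is at most C·n^8 and for each integer ℓ ≥ 4 the number of cuts with capacity in [ℓp(p+q), (ℓ+1)p(p+q)) is at most C·n^{2ℓ+2}, while cuts in the latter class have bad-event probability at most n^{−5ℓ}. Then the total probability that some cut witnesses infeasibility of F is at most C·n^{−2} + C·Σ_{ℓ≥4} n^{−3ℓ+2}, which is at most 1/6 for all sufficiently large n. -/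
/-! Every nontrivial cut is either small or lies in the band `ℓ = ⌊cap R / (p(p+q))⌋ ≥ 4`. The
small cuts contribute at most `C n^8 · n^{-10}` to the union bound and the `ℓ`-th band at most
`C n^{2ℓ+2} · n^{-5ℓ} = C n^{-(3ℓ-2)}`; these form a geometric series of ratio `n^{-3}`, so the
total is at most `3C n^{-2}`. -/

open Finset

open MeasureTheory ProbabilityTheory

section UnionBound

variable {Ω ι : Type*} [MeasurableSpace Ω] (μ : Measure Ω)

lemma measure_biUnion_le_ofReal_mul [Finite ι] {s : Set ι} {E : ι → Set Ω} {c b : ℝ}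
    (hs : (s.ncard : ℝ) ≤ c) (hb : 0 ≤ b) (hE : ∀ i ∈ s, μ (E i) ≤ ENNReal.ofReal b) :
    μ (⋃ i ∈ s, E i) ≤ ENNReal.ofReal (c * b) := by
  obtain ⟨t, rfl⟩ := s.toFinite.exists_finset_coe
  rw [Set.ncard_coe_finset] at hs
  calc μ (⋃ i ∈ (t : Set ι), E i) ≤ ∑ i ∈ t, μ (E i) := measure_biUnion_finset_le t E
    _ ≤ ∑ _i ∈ t, ENNReal.ofReal b := Finset.sum_le_sum hE
    _ = ENNReal.ofReal (t.card * b) := by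
      rw [Finset.sum_const, nsmul_eq_mul, ENNReal.ofReal_mul (Nat.cast_nonneg _),
        ENNReal.ofReal_natCast]
    _ ≤ ENNReal.ofReal (c * b) := ENNReal.ofReal_le_ofReal (by gcongr)

lemma measure_iUnion_le_ofReal_tsum [Countable ι] {E : ι → Set Ω} {f : ι → ℝ}
    (hf₀ : ∀ i, 0 ≤ f i) (hf : Summable f) (hE : ∀ i, μ (E i) ≤ ENNReal.ofReal (f i)) :
    μ (⋃ i, E i) ≤ ENNReal.ofReal (∑' i, f i) := by
  rw [ENNReal.ofReal_tsum_of_nonneg hf₀ hf]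
  exact (measure_iUnion_le E).trans (ENNReal.tsum_le_tsum hE)

end UnionBound

lemma exists_nat_add_mul_le_lt {a x : ℝ} (ha : 0 < a) {k : ℕ} (hk : k * a ≤ x) :
    ∃ ℓ : ℕ, ((ℓ + k : ℕ) : ℝ) * a ≤ x ∧ x < (((ℓ + k : ℕ) : ℝ) + 1) * a := by
  have hx : 0 ≤ x / a := div_nonneg ((by positivity : (0 : ℝ) ≤ k * a).trans hk) ha.le
  have hkm : k ≤ ⌊x / a⌋₊ := Nat.le_floor ((le_div_iff₀ ha).2 hk)
  refine ⟨⌊x / a⌋₊ - k, ?_⟩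
  rw [Nat.sub_add_cancel hkm, ← le_div_iff₀ ha, ← div_lt_iff₀ ha]
  exact ⟨Nat.floor_le hx, Nat.lt_floor_add_one _⟩

lemma iUnion_subset_union_iUnion_bands {ι α : Type*} (P : ι → Prop) (w : ι → ℝ) (E : ι → Set α)
    {a b : ℝ} (ha : 0 < a) {k : ℕ} (hk : k * a ≤ b) :
    ⋃ i, ⋃ (_ : P i), E i ⊆ (⋃ i ∈ {i | P i ∧ w i < b}, E i) ∪
      ⋃ ℓ : ℕ, ⋃ i ∈ {i | P i ∧ ((ℓ + k : ℕ) : ℝ) * a ≤ w i ∧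
        w i < (((ℓ + k : ℕ) : ℝ) + 1) * a}, E i := by
  intro x hx
  simp only [Set.mem_iUnion, Set.mem_union, Set.mem_ofPred_eq] at hx ⊢
  obtain ⟨i, hi, hxi⟩ := hx
  by_cases hw : w i < b
  · exact Or.inl ⟨i, ⟨hi, hw⟩, hxi⟩
  · obtain ⟨ℓ, hlo, hhi⟩ := exists_nat_add_mul_le_lt ha (hk.trans (not_lt.1 hw))
    exact Or.inr ⟨ℓ, i, ⟨hi, hlo, hhi⟩, hxi⟩

lemma pow_mul_one_div_pow_add {x : ℝ} (hx : x ≠ 0) (c : ℝ) (a d : ℕ) :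
    c * x ^ a * (1 / x ^ (a + d)) = c * (1 / x ^ d) := by
  rw [pow_add]
  field_simp

lemma one_div_pow_band_eq (x : ℝ) (ℓ : ℕ) :
    1 / x ^ (3 * (ℓ + 4) - 2) = 1 / x ^ 10 * (1 / x ^ 3) ^ ℓ := by
  rw [show 3 * (ℓ + 4) - 2 = 10 + 3 * ℓ by omega, pow_add, pow_mul, one_div_pow, one_div_mul_one_div]

lemma summable_one_div_pow_band {x : ℝ} (hx : 1 < x) :
    Summable fun ℓ : ℕ => 1 / x ^ (3 * (ℓ + 4) - 2) := by
  have hr : 1 / x ^ 3 < 1 := (div_lt_one (by positivity)).2 (one_lt_pow₀ hx (by norm_num))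
  simpa only [one_div_pow_band_eq] using
    (summable_geometric_of_lt_one (by positivity) hr).mul_left (1 / x ^ 10)

lemma tsum_one_div_pow_band_le {x : ℝ} (hx : 2 ≤ x) :
    ∑' ℓ : ℕ, 1 / x ^ (3 * (ℓ + 4) - 2) ≤ 2 / x ^ 10 := by
  have hr : 1 / x ^ 3 ≤ 1 / 8 := by
    gcongr
    calc (8 : ℝ) = 2 ^ 3 := by norm_num
      _ ≤ x ^ 3 := by gcongr
  have hr₀ : (0 : ℝ) ≤ 1 / x ^ 3 := by positivity
  calc ∑' ℓ : ℕ, 1 / x ^ (3 * (ℓ + 4) - 2) = 1 / x ^ 10 * (1 - 1 / x ^ 3)⁻¹ := by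
        rw [tsum_congr (one_div_pow_band_eq x), tsum_mul_left,
          tsum_geometric_of_lt_one hr₀ (by linarith)]
    _ ≤ 1 / x ^ 10 * 2 := by
        gcongr
        rw [inv_le_comm₀ (by linarith) (by norm_num)]
        linarith
    _ = 2 / x ^ 10 := by ring

lemma exists_union_bound_le_one_sixth {C : ℝ} (hC : 0 ≤ C) :
    ∃ N : ℕ, ∀ n : ℕ, N ≤ n →
      C * (1 / (n : ℝ) ^ 2) + C * ∑' ℓ : ℕ, 1 / (n : ℝ) ^ (3 * (ℓ + 4) - 2) ≤ 1 / 6 := by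
  refine ⟨max 2 ⌈18 * C⌉₊, fun n hn => ?_⟩
  have h2 : (2 : ℝ) ≤ n := by exact_mod_cast (le_max_left _ _).trans hn
  have h18 : 18 * C ≤ n := (Nat.le_ceil _).trans (by exact_mod_cast (le_max_right _ _).trans hn)
  have htail : 2 / (n : ℝ) ^ 10 ≤ 2 / (n : ℝ) ^ 2 := by
    gcongr
    · linarith
    · norm_num
  calc C * (1 / (n : ℝ) ^ 2) + C * ∑' ℓ : ℕ, 1 / (n : ℝ) ^ (3 * (ℓ + 4) - 2)
      ≤ C * (1 / (n : ℝ) ^ 2) + C * (2 / (n : ℝ) ^ 2) := by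
        gcongr
        exact (tsum_one_div_pow_band_le h2).trans htail
    _ = 3 * C / (n : ℝ) ^ 2 := by ring
    _ ≤ 1 / 6 := by
        rw [div_le_div_iff₀ (by positivity) (by norm_num)]
        nlinarith

theorem union_bound_over_cuts_general {Ω : Type} [MeasureSpace Ω]
    [IsProbabilityMeasure (ℙ : Measure Ω)]
    {V ε : Type} [Fintype V] [DecidableEq V] [Fintype ε] [DecidableEq ε]
    (ends : ε → V × V) (S : Finset ε) (p q : ℕ) (hp : 1 ≤ p)
    (n : ℕ) (hn2 : 2 ≤ n)
    (cap : Finset V → ℝ) (C : ℝ) (hC : 0 < C)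
    (F : Ω → Finset ε)
    (hbadall : ∀ R : Finset V, R.Nonempty → R ≠ Finset.univ →
      ℙ {ω | ((F ω ∩ cutEdges ends R) ∩ S).card < p ∧
          (F ω ∩ cutEdges ends R).card < p + q} ≤ ENNReal.ofReal (1 / (n : ℝ) ^ 10))
    (hsmall : (Set.ncard {R : Finset V | R.Nonempty ∧ R ≠ Finset.univ ∧
        cap R < 4 * p * (p + q)} : ℝ) ≤ C * (n : ℝ) ^ 8)
    (hcount : ∀ ℓ : ℕ, 4 ≤ ℓ →
      (Set.ncard {R : Finset V | R.Nonempty ∧ R ≠ Finset.univ ∧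
          (ℓ : ℝ) * (p * (p + q)) ≤ cap R ∧
          cap R < ((ℓ : ℝ) + 1) * (p * (p + q))} : ℝ) ≤ C * (n : ℝ) ^ (2 * ℓ + 2))
    (hbadlarge : ∀ ℓ : ℕ, 4 ≤ ℓ → ∀ R : Finset V, R.Nonempty → R ≠ Finset.univ →
      (ℓ : ℝ) * (p * (p + q)) ≤ cap R → cap R < ((ℓ : ℝ) + 1) * (p * (p + q)) →
      ℙ {ω | ((F ω ∩ cutEdges ends R) ∩ S).card < p ∧
          (F ω ∩ cutEdges ends R).card < p + q} ≤ ENNReal.ofReal (1 / (n : ℝ) ^ (5 * ℓ))) :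
    ℙ (⋃ R : Finset V, ⋃ (_ : R.Nonempty ∧ R ≠ Finset.univ),
        {ω | ((F ω ∩ cutEdges ends R) ∩ S).card < p ∧
          (F ω ∩ cutEdges ends R).card < p + q}) ≤
      ENNReal.ofReal (C * (1 / (n : ℝ) ^ 2) +
        C * ∑' ℓ : ℕ, 1 / (n : ℝ) ^ (3 * (ℓ + 4) - 2)) ∧
    ∃ N : ℕ, ∀ n' : ℕ, N ≤ n' →
      C * (1 / (n' : ℝ) ^ 2) + C * ∑' ℓ : ℕ, 1 / (n' : ℝ) ^ (3 * (ℓ + 4) - 2) ≤ 1 / 6 := by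
  refine ⟨?_, exists_union_bound_le_one_sixth hC.le⟩
  have hn : (2 : ℝ) ≤ n := by exact_mod_cast hn2
  have ha : (0 : ℝ) < p * (p + q) := by
    have : (1 : ℝ) ≤ p := by exact_mod_cast hp
    positivity
  have hcover := iUnion_subset_union_iUnion_bands
    (fun R : Finset V => R.Nonempty ∧ R ≠ Finset.univ) cap
    (fun R => {ω | ((F ω ∩ cutEdges ends R) ∩ S).card < p ∧ (F ω ∩ cutEdges ends R).card < p + q})
    ha (k := 4) (b := 4 * p * (p + q)) (le_of_eq (by push_cast; ring))
  simp only [and_assoc] at hcover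
  have hsmallBad := measure_biUnion_le_ofReal_mul ℙ hsmall (by positivity)
    fun R hR => hbadall R hR.1 hR.2.1
  rw [show 10 = 8 + 2 from rfl, pow_mul_one_div_pow_add (by positivity)] at hsmallBad
  have hband (ℓ : ℕ) := measure_biUnion_le_ofReal_mul ℙ (hcount (ℓ + 4) (by omega))
    (by positivity) fun R hR => hbadlarge (ℓ + 4) (by omega) R hR.1 hR.2.1 hR.2.2.1 hR.2.2.2
  simp only [show ∀ ℓ, 5 * (ℓ + 4) = (2 * (ℓ + 4) + 2) + (3 * (ℓ + 4) - 2) by omega,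
    pow_mul_one_div_pow_add (by positivity : (n : ℝ) ≠ 0)] at hband
  have hlargeBad := measure_iUnion_le_ofReal_tsum ℙ (fun ℓ => by positivity)
    ((summable_one_div_pow_band (by linarith)).mul_left C) hband
  rw [tsum_mul_left] at hlargeBad
  calc _ ≤ _ := measure_mono hcover
    _ ≤ _ := measure_union_le _ _
    _ ≤ _ := add_le_add hsmallBad hlargeBad
    _ = _ := (ENNReal.ofReal_add (by positivity) (by positivity)).symm

/-- Union bound over cut classes: if every bad event (a cut having fewer than `p`
safe and fewer than `p+q` total `F`-edges) has probability at most `n^{-10}`, the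
number of nontrivial cuts of capacity below `4p(p+q)` is at most `C·n^8`, and for
every `ℓ ≥ 4` there are at most `C·n^{2ℓ+2}` cuts of capacity in
`[ℓp(p+q), (ℓ+1)p(p+q))`, each bad with probability at most `n^{-5ℓ}`, then the
probability that some nontrivial cut witnesses infeasibility of the random set `F`
is at most `C·n^{-2} + C·Σ_{ℓ≥4} n^{-(3ℓ-2)}`, a quantity which is at most `1/6`
for all sufficiently large `n`. -/
theorem union_bound_over_cuts {Ω : Type} [MeasureSpace Ω]
    [IsProbabilityMeasure (ℙ : Measure Ω)]
    {V ε : Type} [Fintype V] [DecidableEq V] [Fintype ε] [DecidableEq ε]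
    (ends : ε → V × V) (S : Finset ε) (p q : ℕ) (hp : 1 ≤ p)
    (n : ℕ) (hn : n = Fintype.card V) (hn2 : 2 ≤ n)
    (cap : Finset V → ℝ) (C : ℝ) (hC : 0 < C)
    (y : ε → ℝ) (hy : ∀ e, 0 ≤ y e ∧ y e ≤ 1)
    (F : Ω → Finset ε)
    (hindep : iIndepFun
      (fun (e : ε) (ω : Ω) => decide (e ∈ F ω)) ℙ)
    (hprob : ∀ e : ε, ℙ {ω | e ∈ F ω} = ENNReal.ofReal (y e))
    (hbadall : ∀ R : Finset V, R.Nonempty → R ≠ Finset.univ →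
      ℙ {ω | ((F ω ∩ cutEdges ends R) ∩ S).card < p ∧
          (F ω ∩ cutEdges ends R).card < p + q} ≤ ENNReal.ofReal (1 / (n : ℝ) ^ 10))
    (hsmall : (Set.ncard {R : Finset V | R.Nonempty ∧ R ≠ Finset.univ ∧
        cap R < 4 * p * (p + q)} : ℝ) ≤ C * (n : ℝ) ^ 8)
    (hcount : ∀ ℓ : ℕ, 4 ≤ ℓ →
      (Set.ncard {R : Finset V | R.Nonempty ∧ R ≠ Finset.univ ∧
          (ℓ : ℝ) * (p * (p + q)) ≤ cap R ∧
          cap R < ((ℓ : ℝ) + 1) * (p * (p + q))} : ℝ) ≤ C * (n : ℝ) ^ (2 * ℓ + 2))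
    (hbadlarge : ∀ ℓ : ℕ, 4 ≤ ℓ → ∀ R : Finset V, R.Nonempty → R ≠ Finset.univ →
      (ℓ : ℝ) * (p * (p + q)) ≤ cap R → cap R < ((ℓ : ℝ) + 1) * (p * (p + q)) →
      ℙ {ω | ((F ω ∩ cutEdges ends R) ∩ S).card < p ∧
          (F ω ∩ cutEdges ends R).card < p + q} ≤ ENNReal.ofReal (1 / (n : ℝ) ^ (5 * ℓ))) :
    ℙ (⋃ R : Finset V, ⋃ (_ : R.Nonempty ∧ R ≠ Finset.univ),
        {ω | ((F ω ∩ cutEdges ends R) ∩ S).card < p ∧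
          (F ω ∩ cutEdges ends R).card < p + q}) ≤
      ENNReal.ofReal (C * (1 / (n : ℝ) ^ 2) +
        C * ∑' ℓ : ℕ, 1 / (n : ℝ) ^ (3 * (ℓ + 4) - 2)) ∧
    ∃ N : ℕ, ∀ n' : ℕ, N ≤ n' →
      C * (1 / (n' : ℝ) ^ 2) + C * ∑' ℓ : ℕ, 1 / (n' : ℝ) ^ (3 * (ℓ + 4) - 2) ≤ 1 / 6 :=
  union_bound_over_cuts_general ends S p q hp n hn2 cap C hC F hbadall hsmall hcount hbadlarge
end

section
/- Let F ⊆ E. If for every nontrivial vertex subset R it holds that (p+q)·|F ∩ δ(R) ∩ S| + p·|F ∩ δ(R) ∩ U| ≥ p(p+q), then it is not necessarily true that F is (p,q)-feasible; however, conversely, if F is (p,q)-feasible then (p+q)·|F ∩ δ(R) ∩ S| + p·|F ∩ δ(R) ∩ U| ≥ p(p+q) for every nontrivial R. -/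
open Finset

/-- The capacitated covering constraints `(p+q)·|F∩δ(R)∩S| + p·|F∩δ(R)∩U| ≥ p(p+q)`
are valid for `(p,q)`-feasibility, but satisfying them for every nontrivial cut does
not in general imply `(p,q)`-feasibility. -/
theorem covering_valid_but_not_sufficient :
    (∀ (V ε : Type) [Fintype V] [DecidableEq V] [Fintype ε]
        [DecidableEq ε] (ends : ε → V × V) (S : Finset ε) (p q : ℕ),
      1 ≤ p → ∀ F : Finset ε, Feasible ends S p q F →
        ∀ R : Finset V, R.Nonempty → R ≠ Finset.univ →
          p * (p + q) ≤ (p + q) * ((F ∩ cutEdges ends R) ∩ S).card +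
            p * ((F ∩ cutEdges ends R) ∩ Sᶜ).card) ∧
    ¬ (∀ (V ε : Type) [Fintype V] [DecidableEq V] [Fintype ε]
        [DecidableEq ε] (ends : ε → V × V) (S : Finset ε) (p q : ℕ),
      1 ≤ p → ∀ F : Finset ε,
        (∀ R : Finset V, R.Nonempty → R ≠ Finset.univ →
          p * (p + q) ≤ (p + q) * ((F ∩ cutEdges ends R) ∩ S).card +
            p * ((F ∩ cutEdges ends R) ∩ Sᶜ).card) →
        Feasible ends S p q F) := by
  constructor
  · intro V ε _ _ _ _ ends S p q hp F hF R hR1 hR2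
    set A := F ∩ cutEdges ends R with hA
    have hsplit : (A ∩ S).card + (A ∩ Sᶜ).card = A.card := by
      have h1 : A ∩ S = A.filter (· ∈ S) := by ext x; simp
      have h2 : A ∩ Sᶜ = A.filter (fun x => x ∉ S) := by ext x; simp
      rw [h1, h2, Finset.card_filter_add_card_filter_not]
    rcases hF R hR1 hR2 with h | h
    · calc p * (p + q) = (p + q) * p := Nat.mul_comm _ _
        _ ≤ (p + q) * (A ∩ S).card := Nat.mul_le_mul_left _ h
        _ ≤ _ := Nat.le_add_right _ _
    · calc p * (p + q) ≤ p * A.card := Nat.mul_le_mul_left _ h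
        _ = p * (A ∩ S).card + p * (A ∩ Sᶜ).card := by rw [← hsplit, Nat.mul_add]
        _ ≤ _ := by
            have : p * (A ∩ S).card ≤ (p + q) * (A ∩ S).card :=
              Nat.mul_le_mul_right _ (Nat.le_add_right _ _)
            omega
  · intro h
    have := h Bool (Fin 3) (fun _ => (false, true)) {0} 2 2 (by norm_num)
      Finset.univ (by decide)
    have h2 := this {true} (by decide) (by decide)
    revert h2
    decide
end
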